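/- arXiv:1904.03176 — 3 statements merged into one kernel-verified Lean document; each statement's English description precedes it below -/
import Mathlib

section
/- Let g be a Lie algebra with invariant symmetric bilinear form ⟨,⟩ and R a commutative C-algebra. The map c : (g⊗R) × (g⊗R) → Ω¹_{R/C}/dR defined on pure tensors by c(J⊗r, J'⊗s) = class of ⟨J,J'⟩ r ds is a Lie algebra 2-cocycle on g⊗R with values in the trivial module Ω¹_{R/C}/dR; that is, c is skew-symmetric and satisfies c([x,y],z) + c([y,z],x) + c([z,x],y) = 0 for all x,y,z in g⊗R. -/
/-!
STATEMENT 2: Let `g` be a Lie algebra with invariant symmetric bilinear form and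
`R` a commutative ℂ-algebra.  The bilinear map `c` on `g ⊗ R` (with its Lie
bracket `[J⊗r, J'⊗s] = [J,J']⊗rs`) defined on pure tensors by
`c(J⊗r, J'⊗s) = class of ⟨J,J'⟩ • (r ds)` in `Ω¹_{R/ℂ}/dR` is a Lie algebra
2-cocycle with values in the trivial module `Ω¹_{R/ℂ}/dR`: it is skew-symmetric
and satisfies the cyclic cocycle identity.
-/

open TensorProduct

set_option maxHeartbeats 1000000
set_option synthInstance.maxHeartbeats 400000

private lemma add3_aux {M : Type*} [AddCommGroup M] {a1 a2 b1 b2 c1 c2 : M}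
    (h1 : a1 + b1 + c1 = 0) (h2 : a2 + b2 + c2 = 0) :
    a1 + a2 + (b1 + b2) + (c1 + c2) = 0 := by
  have h : a1 + a2 + (b1 + b2) + (c1 + c2) = (a1 + b1 + c1) + (a2 + b2 + c2) := by abel
  rw [h, h1, h2, add_zero]

theorem cocycle_identity
    (g : Type*) [LieRing g] [LieAlgebra ℂ g]
    (R : Type*) [CommRing R] [Algebra ℂ R]
    (B : g →ₗ[ℂ] g →ₗ[ℂ] ℂ)
    (hsymm : ∀ X Y : g, B X Y = B Y X)
    (hinv : ∀ X Y Z : g, B ⁅X, Y⁆ Z = B X ⁅Y, Z⁆) :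
    ∀ c : (R ⊗[ℂ] g) →ₗ[ℂ] (R ⊗[ℂ] g) →ₗ[ℂ]
        (KaehlerDifferential ℂ R ⧸
          LinearMap.range (KaehlerDifferential.D ℂ R).toLinearMap),
      (∀ (J J' : g) (r s : R),
          c (r ⊗ₜ J) (s ⊗ₜ J')
            = Submodule.Quotient.mk ((B J J') • (r • (KaehlerDifferential.D ℂ R) s))) →
      (∀ x y, c x y = - c y x) ∧
      (∀ x y z, c ⁅x, y⁆ z + c ⁅y, z⁆ x + c ⁅z, x⁆ y = 0) := by
  intro c hc
  have key : ∀ (a : ℂ) (u : R),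
      (Submodule.Quotient.mk (a • KaehlerDifferential.D ℂ R u) :
        KaehlerDifferential ℂ R ⧸ LinearMap.range (KaehlerDifferential.D ℂ R).toLinearMap) = 0 := by
    intro a u
    rw [Submodule.Quotient.mk_eq_zero]
    exact Submodule.smul_mem _ a ⟨u, rfl⟩
  have skew : ∀ x y, c x y + c y x = 0 := by
    intro x y
    induction x using TensorProduct.induction_on with
    | zero => simp
    | tmul r J =>
      induction y using TensorProduct.induction_on with
      | zero => simp
      | tmul s K =>
        rw [hc, hc, hsymm K J, ← Submodule.Quotient.mk_add]
        have h : B J K • r • KaehlerDifferential.D ℂ R s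
              + B J K • s • KaehlerDifferential.D ℂ R r
            = B J K • KaehlerDifferential.D ℂ R (r * s) := by
          rw [Derivation.leibniz]; module
        rw [h]
        exact key _ _
      | add y1 y2 h1 h2 =>
        simp only [map_add, LinearMap.add_apply]
        rw [add_add_add_comm, h1, h2, add_zero]
    | add x1 x2 h1 h2 =>
      simp only [map_add, LinearMap.add_apply]
      rw [add_add_add_comm, h1, h2, add_zero]
  refine ⟨fun x y => eq_neg_of_add_eq_zero_left (skew x y), ?_⟩
  intro x y z
  induction x using TensorProduct.induction_on with
  | zero => simp
  | add x1 x2 h1 h2 =>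
    simp only [add_lie, lie_add, map_add, LinearMap.add_apply]
    exact add3_aux h1 h2
  | tmul r J =>
    induction y using TensorProduct.induction_on with
    | zero => simp
    | add y1 y2 h1 h2 =>
      simp only [add_lie, lie_add, map_add, LinearMap.add_apply]
      exact add3_aux h1 h2
    | tmul s K =>
      induction z using TensorProduct.induction_on with
      | zero => simp
      | add z1 z2 h1 h2 =>
        simp only [add_lie, lie_add, map_add, LinearMap.add_apply]
        exact add3_aux h1 h2
      | tmul t L =>
        have hb : ∀ (a b : R) (X Y : g), (⁅a ⊗ₜ[ℂ] X, b ⊗ₜ[ℂ] Y⁆ : R ⊗[ℂ] g)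
            = (a * b) ⊗ₜ ⁅X, Y⁆ := fun _ _ _ _ => rfl
        rw [hb, hb, hb, hc, hc, hc]
        have e1 : B ⁅K, L⁆ J = B ⁅J, K⁆ L := by
          rw [hinv J K L, hsymm]
        have e2 : B ⁅L, J⁆ K = B ⁅J, K⁆ L := by
          rw [hinv L J K, hsymm]
        rw [e1, e2, ← Submodule.Quotient.mk_add, ← Submodule.Quotient.mk_add]
        have h : B ⁅J, K⁆ L • (r * s) • KaehlerDifferential.D ℂ R t
              + B ⁅J, K⁆ L • (s * t) • KaehlerDifferential.D ℂ R r
              + B ⁅J, K⁆ L • (t * r) • KaehlerDifferential.D ℂ R s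
            = B ⁅J, K⁆ L • KaehlerDifferential.D ℂ R (r * s * t) := by
          rw [Derivation.leibniz (KaehlerDifferential.D ℂ R) (r * s) t,
            Derivation.leibniz (KaehlerDifferential.D ℂ R) r s]
          module
        rw [h]
        exact key _ _
end

section
/- Let g be a Lie algebra with invariant symmetric form ⟨,⟩ and R a commutative C-algebra. Then the vector space (g ⊗ R) ⊕ Ω¹_{R/C}/dR with bracket [J⊗r + ω, J'⊗s + ω'] = [J,J']⊗rs + class(⟨J,J'⟩ r ds) is a Lie algebra, and it is a central extension of g⊗R by Ω¹_{R/C}/dR. -/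
/-! The bracket is the central extension of the Lie algebra `R ⊗ g` by the trivial module
`Ω¹/dR` along `c(r ⊗ J, s ⊗ J') = ⟨J, J'⟩ [r ds]`, so everything reduces to `c` being a
2-cocycle. It is alternating because `r ds + s dr = d(rs)` and `r dr = d(r²)/2` are exact, and by
invariance of the form the cocycle identity becomes the exactness of
`r d(st) + s d(rt) - rs dt = d(rst)`. -/

open TensorProduct LieModule.Cohomology LieAlgebra

section Transport
variable {k E V : Type*} [CommRing k] [LieRing E] [LieAlgebra k E] [AddCommGroup V] [Module k V]

def LinearEquiv.transportedBracket (e : E ≃ₗ[k] V) : V →ₗ[k] V →ₗ[k] V :=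
  ((LieModule.toEnd k E E : E →ₗ[k] Module.End k E).compr₂ e.toLinearMap).compl₁₂
    e.symm.toLinearMap e.symm.toLinearMap

variable (e : E ≃ₗ[k] V)

theorem LinearEquiv.transportedBracket_apply (x y : V) :
    e.transportedBracket x y = e ⁅e.symm x, e.symm y⁆ := rfl

theorem LinearEquiv.transportedBracket_self (x : V) : e.transportedBracket x x = 0 := by
  simp [LinearEquiv.transportedBracket_apply]

theorem LinearEquiv.transportedBracket_leibniz (x y z : V) :
    e.transportedBracket x (e.transportedBracket y z) =
      e.transportedBracket (e.transportedBracket x y) z +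
        e.transportedBracket y (e.transportedBracket x z) := by
  simp only [LinearEquiv.transportedBracket_apply, LinearEquiv.symm_apply_apply]
  rw [← map_add, leibniz_lie]

end Transport

section CentralExtension
variable {k L M : Type*} [CommRing k] [LieRing L] [LieAlgebra k L] [AddCommGroup M] [Module k M]
  (c : twoCocycle k L (TrivialLieModule k L M))

def LieAlgebra.ofTwoCocycle.equivProd : ofTwoCocycle c ≃ₗ[k] L × M :=
  ((ofProd c).symm.linearEquiv k).trans
    ((LinearEquiv.refl k L).prodCongr (TrivialLieModule.equiv k L M))

theorem LieAlgebra.ofTwoCocycle.equivProd_lie (x y : L × M) :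
    ofTwoCocycle.equivProd c
        ⁅(ofTwoCocycle.equivProd c).symm x, (ofTwoCocycle.equivProd c).symm y⁆ =
      (⁅x.1, y.1⁆, TrivialLieModule.equiv k L M (c.1 x.1 y.1)) := by
  simp [ofTwoCocycle.equivProd, bracket_ofTwoCocycle, trivial_lie_zero]

end CentralExtension

namespace LinearMap.BilinMap

section Module
variable {k A L M : Type*} [CommRing k] [AddCommGroup A] [Module k A] [AddCommGroup L]
  [Module k L] [AddCommGroup M] [Module k M] (φ : A →ₗ[k] A →ₗ[k] M) (B : L →ₗ[k] L →ₗ[k] k)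

def tmulRid : A ⊗[k] L →ₗ[k] A ⊗[k] L →ₗ[k] M :=
  (BilinMap.tmul φ B).compr₂ (TensorProduct.rid k M).toLinearMap

@[simp]
theorem tmulRid_tmul (a b : A) (x y : L) :
    tmulRid φ B (a ⊗ₜ x) (b ⊗ₜ y) = B x y • φ a b := rfl

variable {φ B}

theorem tmulRid_add_swap (hφ_swap : ∀ a b, φ a b + φ b a = 0) (hB : ∀ x y, B x y = B y x)
    (u v : A ⊗[k] L) : tmulRid φ B u v + tmulRid φ B v u = 0 := by
  induction u using TensorProduct.induction_on with
  | zero => simp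
  | add u₁ u₂ h₁ h₂ =>
    simp only [map_add, LinearMap.add_apply]
    rw [add_add_add_comm, h₁, h₂, add_zero]
  | tmul a x =>
    induction v using TensorProduct.induction_on with
    | zero => simp
    | add v₁ v₂ h₁ h₂ =>
      simp only [map_add, LinearMap.add_apply]
      rw [add_add_add_comm, h₁, h₂, add_zero]
    | tmul b y => rw [tmulRid_tmul, tmulRid_tmul, hB y x, ← smul_add, hφ_swap, smul_zero]

theorem tmulRid_self (hφ : ∀ a, φ a a = 0) (hB : ∀ x y, B x y = B y x) (u : A ⊗[k] L) :
    tmulRid φ B u u = 0 := by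
  have hφ_swap (a b : A) : φ a b + φ b a = 0 := by simpa [hφ] using hφ (a + b)
  induction u using TensorProduct.induction_on with
  | zero => simp
  | add u v hu hv =>
    simp only [map_add, LinearMap.add_apply, hu, hv, zero_add, add_zero]
    rw [add_comm, tmulRid_add_swap hφ_swap hB]
  | tmul a x => simp [hφ]

end Module

section Lie
variable {k A L M : Type*} [CommRing k] [CommRing A] [Algebra k A] [LieRing L] [LieAlgebra k L]
  [AddCommGroup M] [Module k M] {φ : A →ₗ[k] A →ₗ[k] M} {B : L →ₗ[k] L →ₗ[k] k}

theorem tmulRid_lie (hφ_mul : ∀ a b c, φ a (b * c) + φ b (a * c) = φ (a * b) c)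
    (hB_lie : ∀ x y z, B ⁅x, y⁆ z = B x ⁅y, z⁆) (u v w : A ⊗[k] L) :
    tmulRid φ B u ⁅v, w⁆ = tmulRid φ B ⁅u, v⁆ w + tmulRid φ B v ⁅u, w⁆ := by
  induction u using TensorProduct.induction_on with
  | zero => simp
  | add u₁ u₂ h₁ h₂ => simp only [add_lie, map_add, LinearMap.add_apply, h₁, h₂]; abel
  | tmul a x =>
    induction v using TensorProduct.induction_on with
    | zero => simp
    | add v₁ v₂ h₁ h₂ =>
      simp only [add_lie, lie_add, map_add, LinearMap.add_apply, h₁, h₂]; abel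
    | tmul b y =>
      induction w using TensorProduct.induction_on with
      | zero => simp
      | add w₁ w₂ h₁ h₂ => simp only [lie_add, map_add, h₁, h₂]; abel
      | tmul c z =>
        simp only [ExtendScalars.bracket_tmul, tmulRid_tmul, ← hB_lie, ← lie_skew x y, map_neg,
          LinearMap.neg_apply, neg_smul, ← hφ_mul a b c]
        rw [smul_add]; abel

variable (φ B)

def tmulRidTwoCocycle (hφ : ∀ a, φ a a = 0)
    (hφ_mul : ∀ a b c, φ a (b * c) + φ b (a * c) = φ (a * b) c)
    (hB : ∀ x y, B x y = B y x) (hB_lie : ∀ x y z, B ⁅x, y⁆ z = B x ⁅y, z⁆) :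
    twoCocycle k (A ⊗[k] L) (TrivialLieModule k (A ⊗[k] L) M) where
  val := ⟨(tmulRid φ B).compr₂ (TrivialLieModule.equiv k (A ⊗[k] L) M).symm.toLinearMap,
    fun u => by simp [tmulRid_self hφ hB]⟩
  property := (mem_twoCocycle_iff_of_trivial k _ _ _).2 fun u v w =>
    (congrArg (TrivialLieModule.equiv k (A ⊗[k] L) M).symm
      (tmulRid_lie hφ_mul hB_lie u v w)).trans (map_add _ _ _)

variable {φ B} in
theorem tmulRidTwoCocycle_tmul (hφ hφ_mul hB hB_lie) (a b : A) (x y : L) :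
    TrivialLieModule.equiv k (A ⊗[k] L) M
        ((tmulRidTwoCocycle φ B hφ hφ_mul hB hB_lie).1 (a ⊗ₜ x) (b ⊗ₜ y)) =
      B x y • φ a b :=
  rfl

end Lie

end LinearMap.BilinMap

namespace KaehlerDifferential
variable (k R : Type*) [CommRing k] [CommRing R] [Algebra k R]

noncomputable def smulDModRange :
    R →ₗ[k] R →ₗ[k] Ω[R⁄k] ⧸ LinearMap.range (D k R).toLinearMap :=
  LinearMap.mk₂ k (fun r s => Submodule.Quotient.mk (r • D k R s))
    (fun r r' s => by rw [add_smul, Submodule.Quotient.mk_add])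
    (fun a r s => by rw [smul_assoc, Submodule.Quotient.mk_smul])
    (fun r s s' => by rw [map_add, smul_add, Submodule.Quotient.mk_add])
    (fun a r s => by rw [Derivation.map_smul, smul_comm, Submodule.Quotient.mk_smul])

variable {k R}

@[simp]
theorem smulDModRange_apply (r s : R) :
    smulDModRange k R r s = Submodule.Quotient.mk (r • D k R s) := rfl

theorem smulDModRange_self [Invertible (2 : k)] (r : R) : smulDModRange k R r r = 0 := by
  refine (Submodule.Quotient.mk_eq_zero _).2 ⟨⅟(2 : k) • (r * r), ?_⟩
  simp only [Derivation.coeFn_coe, Derivation.map_smul, Derivation.leibniz, ← two_smul k,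
    smul_smul, invOf_mul_self, one_smul]

theorem smulDModRange_mul_right_add (a b c : R) :
    smulDModRange k R a (b * c) + smulDModRange k R b (a * c) = smulDModRange k R (a * b) c := by
  rw [← sub_eq_zero]
  simp only [smulDModRange_apply, ← Submodule.Quotient.mk_add, ← Submodule.Quotient.mk_sub]
  refine (Submodule.Quotient.mk_eq_zero _).2 ⟨a * b * c, ?_⟩
  simp only [Derivation.coeFn_coe, Derivation.leibniz, smul_add, smul_smul]
  module

end KaehlerDifferential

theorem central_extension_lie_algebra
    (g : Type*) [LieRing g] [LieAlgebra ℂ g]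
    (R : Type*) [CommRing R] [Algebra ℂ R]
    (B : g →ₗ[ℂ] g →ₗ[ℂ] ℂ)
    (hsymm : ∀ X Y : g, B X Y = B Y X)
    (hinv : ∀ X Y Z : g, B ⁅X, Y⁆ Z = B X ⁅Y, Z⁆) :
    ∃ b : ((R ⊗[ℂ] g) × (KaehlerDifferential ℂ R ⧸
            LinearMap.range (KaehlerDifferential.D ℂ R).toLinearMap)) →ₗ[ℂ]
          ((R ⊗[ℂ] g) × (KaehlerDifferential ℂ R ⧸
            LinearMap.range (KaehlerDifferential.D ℂ R).toLinearMap)) →ₗ[ℂ]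
          ((R ⊗[ℂ] g) × (KaehlerDifferential ℂ R ⧸
            LinearMap.range (KaehlerDifferential.D ℂ R).toLinearMap)),
      -- it is a Lie bracket:
      (∀ x, b x x = 0) ∧
      (∀ x y z, b x (b y z) = b (b x y) z + b y (b x z)) ∧
      -- its value on generators (in particular the second summand is central):
      (∀ (J J' : g) (r s : R) (ω ω' : KaehlerDifferential ℂ R ⧸
            LinearMap.range (KaehlerDifferential.D ℂ R).toLinearMap),
        b (r ⊗ₜ J, ω) (s ⊗ₜ J', ω')
          = ((r * s) ⊗ₜ ⁅J, J'⁆,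
             Submodule.Quotient.mk ((B J J') • (r • (KaehlerDifferential.D ℂ R) s)))) := by
  let c := LinearMap.BilinMap.tmulRidTwoCocycle (KaehlerDifferential.smulDModRange ℂ R) B
    KaehlerDifferential.smulDModRange_self KaehlerDifferential.smulDModRange_mul_right_add
    hsymm hinv
  let e := ofTwoCocycle.equivProd c
  refine ⟨e.transportedBracket, e.transportedBracket_self, e.transportedBracket_leibniz, ?_⟩
  intro J J' r s ω ω'
  rw [e.transportedBracket_apply, ofTwoCocycle.equivProd_lie]
  simp [c, LinearMap.BilinMap.tmulRidTwoCocycle_tmul, Submodule.Quotient.mk_smul]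
end

section
/- Let h be a Lie algebra, M a trivial h-module, φ⁽¹⁾ : h⊗h → M a skew bilinear map, and φ⁽⁰⁾ : h⊗h⊗h → M an alternating trilinear map, with d : M' → M a linear map from another trivial module M' (forming a two-term complex). If d∘φ⁽⁰⁾ plus the Chevalley-Eilenberg differential applied to φ⁽¹⁾ vanishes and the Chevalley-Eilenberg differential of φ⁽⁰⁾ vanishes, then h ⊕ M' ⊕ M with ℓ₁ = d, ℓ₂ = [·,·] + φ⁽¹⁾, ℓ₃ = φ⁽⁰⁾ (all other brackets zero) satisfies the L∞ (generalized Jacobi) identities up to the relevant arity; in particular the degree-zero cohomology of (h ⊕ M' ⊕ M, ℓ₁) inherits a Lie algebra structure equal to the central extension of h by coker(d) with cocycle induced by φ⁽¹⁾. -/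
/-!
STATEMENT 11: Let `h` be a Lie algebra, `M` a trivial module, `φ⁽¹⁾ : h⊗h → M`
skew bilinear, `φ⁽⁰⁾ : h⊗h⊗h → M'` alternating trilinear, and `d : M' → M`
linear (a two-term complex of trivial modules).  If `d∘φ⁽⁰⁾ + d_CE φ⁽¹⁾ = 0`
and `d_CE φ⁽⁰⁾ = 0`, then the `L∞` (generalized Jacobi) identities hold for
`ℓ₁ = d`, `ℓ₂ = [·,·] + φ⁽¹⁾`, `ℓ₃ = φ⁽⁰⁾`; in particular the degree-zero
cohomology `h ⊕ coker(d)` inherits a Lie algebra structure equal to the central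
extension of `h` by `coker(d)` with cocycle induced by `φ⁽¹⁾`:
`[(x,m),(y,m')] = ([x,y], class(φ⁽¹⁾(x,y)))`.
-/

theorem linfty_model_central_extension
    (h : Type*) [LieRing h] [LieAlgebra ℂ h]
    (M M' : Type*) [AddCommGroup M] [Module ℂ M] [AddCommGroup M'] [Module ℂ M']
    (d : M' →ₗ[ℂ] M)
    (φ1 : h →ₗ[ℂ] h →ₗ[ℂ] M) (hskew : ∀ x y, φ1 x y = - φ1 y x)
    (φ0 : h →ₗ[ℂ] h →ₗ[ℂ] h →ₗ[ℂ] M')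
    (halt1 : ∀ x y z, φ0 x y z = - φ0 y x z)
    (halt2 : ∀ x y z, φ0 x y z = - φ0 x z y)
    -- d ∘ φ⁽⁰⁾ + d_CE φ⁽¹⁾ = 0 :
    (hcompat : ∀ x y z,
      d (φ0 x y z) + (- φ1 ⁅x, y⁆ z + φ1 ⁅x, z⁆ y - φ1 ⁅y, z⁆ x) = 0)
    -- d_CE φ⁽⁰⁾ = 0 :
    (hclosed : ∀ x y z w,
      φ0 ⁅x, y⁆ z w - φ0 ⁅x, z⁆ y w + φ0 ⁅x, w⁆ y z
        + φ0 ⁅y, z⁆ x w - φ0 ⁅y, w⁆ x z + φ0 ⁅z, w⁆ x y = 0) :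
    ∃ b : (h × (M ⧸ LinearMap.range d)) →ₗ[ℂ] (h × (M ⧸ LinearMap.range d)) →ₗ[ℂ]
          (h × (M ⧸ LinearMap.range d)),
      (∀ u, b u u = 0) ∧
      (∀ u v w, b u (b v w) = b (b u v) w + b v (b u w)) ∧
      (∀ (x y : h) (m m' : M ⧸ LinearMap.range d),
        b (x, m) (y, m') = (⁅x, y⁆, Submodule.Quotient.mk (φ1 x y))) := by

  classical
  let Q := M ⧸ LinearMap.range d
  let π : M →ₗ[ℂ] Q := (LinearMap.range d).mkQ
  refine ⟨LinearMap.mk₂ ℂ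
    (fun u v => (⁅u.1, v.1⁆, π (φ1 u.1 v.1)))
    (fun u u' v => by simp [add_lie, Prod.ext_iff])
    (fun c u v => by simp [smul_lie, Prod.ext_iff])
    (fun u v v' => by simp [lie_add, Prod.ext_iff])
    (fun c u v => by simp [lie_smul, Prod.ext_iff]), ?_, ?_, ?_⟩
  · intro u
    have h1 : φ1 u.1 u.1 = 0 := by
      have h2 := hskew u.1 u.1
      have h3 : (2:ℂ) • φ1 u.1 u.1 = 0 := by
        rw [two_smul]; nth_rewrite 1 [h2]; exact neg_add_cancel _
      exact (smul_eq_zero.mp h3).resolve_left (by norm_num)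
    simp [LinearMap.mk₂_apply, h1, Prod.ext_iff]
  · intro u v w
    simp only [LinearMap.mk₂_apply, Prod.mk.injEq, Prod.mk_add_mk]
    refine ⟨leibniz_lie u.1 v.1 w.1, ?_⟩
    rw [← map_add, eq_comm, ← sub_eq_zero, ← map_sub]
    have : φ1 ⁅u.1, v.1⁆ w.1 + φ1 v.1 ⁅u.1, w.1⁆ - φ1 u.1 ⁅v.1, w.1⁆
        = d (φ0 u.1 v.1 w.1) := by
      have hc := hcompat u.1 v.1 w.1
      have h1 := hskew v.1 ⁅u.1, w.1⁆
      have h2 := hskew u.1 ⁅v.1, w.1⁆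
      rw [h1, h2]
      have hd := eq_neg_of_add_eq_zero_left hc
      rw [hd]; abel
    rw [this]
    exact (Submodule.Quotient.mk_eq_zero _).2 ⟨_, rfl⟩
  · intro x y m m'
    rfl
end
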